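/- Let c₀ > 0, let n, m be positive integers, let β > 0, and let μ > 0 satisfy μ ≥ 2√(β + log(2m)). Let s ∈ (0, 1] satisfy s ≥ c₀²μ²/(8n), and let A ∈ ℝ^{m×n} be a sparse Gaussian random matrix with sparsity parameter s. Then for every x ∈ ℝ^n with ‖x‖_∞ ≤ c₀·n^{−1/2}·‖x‖₂, one has P( ‖A·x‖_∞ ≤ μ·‖x‖₂ ) ≥ 1 − e^{−β}. -/

import Mathlib

open MeasureTheory ProbabilityTheory Real
open scoped NNReal ENNReal

noncomputable section

/-- Matrix–vector product for matrices represented as functions. -/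
def matVec {a b : ℕ} (M : Fin a → Fin b → ℝ) (x : Fin b → ℝ) : Fin a → ℝ :=
  fun i => ∑ j, M i j * x j

/-- Matrix–matrix product for matrices represented as functions. -/
def matMul {a b c : ℕ} (M : Fin a → Fin b → ℝ) (N : Fin b → Fin c → ℝ) :
    Fin a → Fin c → ℝ :=
  fun i k => ∑ j, M i j * N j k

/-- Powers of a square matrix represented as a function. -/
def matPow {a : ℕ} (M : Fin a → Fin a → ℝ) : ℕ → (Fin a → Fin a → ℝ)
  | 0 => fun i j => if i = j then 1 else 0
  | k + 1 => matMul (matPow M k) M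

/-- The ℓ¹ norm on ℝ^k. -/
def l1Norm {k : ℕ} (x : Fin k → ℝ) : ℝ := ∑ i, |x i|

/-- The ℓ² norm on ℝ^k. -/
def l2Norm {k : ℕ} (x : Fin k → ℝ) : ℝ := Real.sqrt (∑ i, (x i) ^ 2)

/-- The ℓ^∞ norm on ℝ^k. -/
def lInfNorm {k : ℕ} (x : Fin k → ℝ) : ℝ := ⨆ i, |x i|

/-- The (∞,1) operator norm: `max_{x ≠ 0} ‖Kx‖₁ / ‖x‖_∞`. -/
def opNormInfOne {a b : ℕ} (K : Fin a → Fin b → ℝ) : ℝ :=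
  sSup {t : ℝ | ∃ x : Fin b → ℝ, x ≠ 0 ∧ t = l1Norm (matVec K x) / lInfNorm x}

/-- The (∞,∞) operator norm: `max_{x ≠ 0} ‖Kx‖_∞ / ‖x‖_∞`. -/
def opNormInfInf {a b : ℕ} (K : Fin a → Fin b → ℝ) : ℝ :=
  sSup {t : ℝ | ∃ x : Fin b → ℝ, x ≠ 0 ∧ t = lInfNorm (matVec K x) / lInfNorm x}

/-- The law `(1-s)·δ₀ + s·N(0,1/s)` of a single entry of a sparse Gaussian random matrix. -/
def sparseGaussianLaw (s : ℝ) : Measure ℝ :=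
  (Real.toNNReal (1 - s)) • Measure.dirac (0 : ℝ) +
    (Real.toNNReal s) • gaussianReal 0 (Real.toNNReal s)⁻¹

/-- The law of a sparse Gaussian random matrix with i.i.d. entries of law
`(1-s)·δ₀ + s·N(0,1/s)`. -/
def sparseGaussianMatrixLaw (m n : ℕ) (s : ℝ) : Measure (Fin m → Fin n → ℝ) :=
  Measure.pi fun _ : Fin m => Measure.pi fun _ : Fin n => sparseGaussianLaw s

/-- The uniform law on `{-1, 1}`. -/
def signLaw : Measure ℝ :=
  ((2 : ℝ≥0)⁻¹) • Measure.dirac (1 : ℝ) + ((2 : ℝ≥0)⁻¹) • Measure.dirac (-1 : ℝ)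

/-- The law of a vector of i.i.d. uniform ±1 signs. -/
def signVecLaw (n : ℕ) : Measure (Fin n → ℝ) := Measure.pi fun _ : Fin n => signLaw

/-- Bitwise dot product of the binary representations of two natural numbers. -/
def bitDot (i j : ℕ) : ℕ :=
  ∑ k ∈ Finset.range i.size, if i.testBit k && j.testBit k then 1 else 0

/-- The normalized Walsh–Hadamard matrix `H_{ij} = n^{-1/2} (-1)^{⟨i,j⟩}` (0-indexed). -/
def walshHadamard (n : ℕ) : Fin n → Fin n → ℝ :=
  fun i j => (Real.sqrt n)⁻¹ * (-1 : ℝ) ^ bitDot (i : ℕ) (j : ℕ)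

/-- The fast Johnson–Lindenstrauss transform `Φ = A·H·D` where `D = diag d`. -/
def fjlt {m n : ℕ} (A : Fin m → Fin n → ℝ) (d : Fin n → ℝ) : Fin m → Fin n → ℝ :=
  matMul A (matMul (walshHadamard n) (fun i j => if i = j then d i else 0))

/-- The coefficient of `z^j` in `(1 + z + ⋯ + z^{lt-1})^r`. -/
def condCoeff (r lt : ℕ) (j : ℕ) : ℝ :=
  ((∑ i ∈ Finset.range lt, (Polynomial.X : Polynomial ℝ) ^ i) ^ r).coeff j

/-- The condensation vector `v ∈ ℝ^λ` of order `r`. -/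
def condVec (r lt lam : ℕ) : Fin lam → ℝ := fun j => condCoeff r lt (j : ℕ)

/-- The block matrix `I_p ⊗ v ∈ ℝ^{p × (λp)}` built from a row vector `v ∈ ℝ^λ`. -/
def kronRow {lam p : ℕ} (v : Fin lam → ℝ) (i : Fin p) (c : Fin (lam * p)) : ℝ :=
  if (c : ℕ) / lam = (i : ℕ) then
    v ⟨(c : ℕ) % lam, Nat.mod_lt _ (Nat.pos_of_ne_zero fun h => absurd c.isLt (by simp [h]))⟩
  else 0

/-- The condensation operator `V = I_p ⊗ v`. -/
def condOp (r lt lam p : ℕ) : Fin p → Fin (lam * p) → ℝ :=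
  kronRow (condVec r lt lam)

/-- The normalized condensation operator `Ṽ = (√(π/2)/(p‖v‖₂)) V`. -/
def normCondOp (r lt lam p : ℕ) : Fin p → Fin (lam * p) → ℝ :=
  fun i c => (Real.sqrt (Real.pi / 2) / ((p : ℝ) * l2Norm (condVec r lt lam))) *
    condOp r lt lam p i c

/-- The first-order difference matrix `P`. -/
def diffMat (m : ℕ) : Fin m → Fin m → ℝ :=
  fun i j => if (i : ℕ) = (j : ℕ) then 1 else if (i : ℕ) = (j : ℕ) + 1 then -1 else 0

/-- Pairing `(i, k) ↦ i·λ + k` as an index into `Fin (λ·p)`. -/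
def finPair {p lam : ℕ} (i : Fin p) (k : Fin lam) : Fin (lam * p) :=
  ⟨(i : ℕ) * lam + (k : ℕ), by
    calc (i : ℕ) * lam + (k : ℕ) < (i : ℕ) * lam + lam := Nat.add_lt_add_left k.isLt _
      _ = ((i : ℕ) + 1) * lam := by ring
      _ ≤ p * lam := Nat.mul_le_mul_right lam i.isLt
      _ = lam * p := Nat.mul_comm p lam⟩

/-- The Kronecker product `v^T ⊗ y ∈ ℝ^{λn}`, whose `(k·n + j)`-th entry is `v_k · y_j`. -/
def kronVec {lam n : ℕ} (v : Fin lam → ℝ) (y : Fin n → ℝ) : Fin (lam * n) → ℝ :=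
  fun c =>
    have hn : 0 < n := Nat.pos_of_ne_zero fun h => absurd c.isLt (by simp [h])
    v ⟨(c : ℕ) / n, (Nat.div_lt_iff_lt_mul hn).mpr c.isLt⟩ * y ⟨(c : ℕ) % n, Nat.mod_lt _ hn⟩

/-- Reshaping of an `(λp) × n` matrix into a `p × (λn)` matrix, with
`B_{i, k·n + j} = A_{i·λ + k, j}`. -/
def reshapeMat {lam p n : ℕ} (A : Fin (lam * p) → Fin n → ℝ) :
    Fin p → Fin (lam * n) → ℝ :=
  fun i c =>
    have hn : 0 < n := Nat.pos_of_ne_zero fun h => absurd c.isLt (by simp [h])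
    A (finPair i ⟨(c : ℕ) / n, (Nat.div_lt_iff_lt_mul hn).mpr c.isLt⟩)
      ⟨(c : ℕ) % n, Nat.mod_lt _ hn⟩

/-- The support `n_j = σ·j² + 1` (zero-indexed `j`, i.e. `σ(j-1)²+1` one-indexed). -/
def sigmaDeltaIdx (σ : ℕ) {r : ℕ} (j : Fin r) : ℕ := σ * (j : ℕ) ^ 2 + 1

/-- The filter coefficient `d_j = ∏_{i ≠ j} n_i / (n_i - n_j)`. -/
def sigmaDeltaCoef (σ : ℕ) {r : ℕ} (j : Fin r) : ℝ :=
  ∏ i ∈ Finset.univ.erase j,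
    (sigmaDeltaIdx σ i : ℝ) / ((sigmaDeltaIdx σ i : ℝ) - (sigmaDeltaIdx σ j : ℝ))

end

/-!
Each coordinate of `A x` is a sum `∑ⱼ aⱼ xⱼ` of independent sparse Gaussian variables. A single
entry has moment generating function `1 - s + s exp (t² / (2s))`, which for `t² ≤ 2s` is at most
`exp ((e - 1) t² / 2)` because `exp u ≤ 1 + (e - 1) u` on `[0, 1]`. The spread condition on `x`
and the lower bound on `s` make `t = μ / (2 ‖x‖₂)` admissible in every coordinate, so the Chernoff
bound gives `P(|(A x)ᵢ| ≥ μ ‖x‖₂) ≤ 2 exp (-μ² / 2 + (e - 1) μ² / 8) ≤ 2 exp (-μ² / 4)`, and the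
union bound over the `m` rows loses the factor `2m ≤ exp (μ² / 4 - β)`.
-/

lemma exp_le_one_add_exp_one_sub_one_mul {u : ℝ} (h0 : 0 ≤ u) (h1 : u ≤ 1) :
    exp u ≤ 1 + (exp 1 - 1) * u := by
  have := convexOn_exp.2 (Set.mem_univ 0) (Set.mem_univ 1) (sub_nonneg.2 h1) h0 (by ring)
  simp only [smul_eq_mul, mul_zero, mul_one, zero_add, exp_zero] at this
  linarith

lemma two_mul_mul_exp_neg_sq_div_four_le {m β μ : ℝ} (hm : 0 ≤ m)
    (hμ : 2 * √(β + log (2 * m)) ≤ μ) : 2 * m * exp (-(μ ^ 2 / 4)) ≤ exp (-β) := by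
  rcases hm.eq_or_lt with rfl | hm
  · simp [(exp_pos _).le]
  have hβμ : β + log (2 * m) ≤ μ ^ 2 / 4 := by
    have := (sqrt_le_iff.1 (le_div_iff₀' two_pos |>.2 hμ)).2
    linarith
  calc 2 * m * exp (-(μ ^ 2 / 4)) = exp (log (2 * m) - μ ^ 2 / 4) := by
        rw [exp_sub, exp_log (by positivity), exp_neg]; ring
    _ ≤ exp (-β) := exp_le_exp.2 (by linarith)

section Norms

variable {k : ℕ}

lemma abs_le_lInfNorm (x : Fin k → ℝ) (i : Fin k) : |x i| ≤ lInfNorm x :=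
  le_ciSup (f := fun j => |x j|) (Finite.bddAbove_range _) i

lemma lInfNorm_le {x : Fin k → ℝ} {r : ℝ} (h : ∀ i, |x i| ≤ r) (hr : 0 ≤ r) : lInfNorm x ≤ r :=
  Real.iSup_le h hr

lemma measurable_lInfNorm : Measurable (lInfNorm : (Fin k → ℝ) → ℝ) :=
  Measurable.iSup fun i => (measurable_pi_apply i).abs

lemma measurableSet_lInfNorm_matVec_le {a : ℕ} (x : Fin k → ℝ) (r : ℝ) :
    MeasurableSet {M : Fin a → Fin k → ℝ | lInfNorm (matVec M x) ≤ r} :=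
  measurableSet_le (measurable_lInfNorm.comp (by unfold matVec; fun_prop)) measurable_const

lemma compl_setOf_lInfNorm_matVec_le_subset {a : ℕ} (x : Fin k → ℝ) {r : ℝ} (hr : 0 ≤ r) :
    {M : Fin a → Fin k → ℝ | lInfNorm (matVec M x) ≤ r}ᶜ
      ⊆ ⋃ i, Function.eval i ⁻¹' {v | r ≤ |v ⬝ᵥ x|} := by
  intro M hM
  by_contra h
  simp only [Set.mem_iUnion, Set.mem_preimage, Function.eval, Set.mem_ofPred_eq, not_exists,
    not_le] at h
  exact hM (lInfNorm_le (fun i => (h i).le) hr)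

lemma l2Norm_sq (x : Fin k → ℝ) : l2Norm x ^ 2 = ∑ i, x i ^ 2 :=
  sq_sqrt (Finset.sum_nonneg fun _ _ => sq_nonneg _)

lemma l2Norm_pos {x : Fin k → ℝ} (hx : x ≠ 0) : 0 < l2Norm x := by
  obtain ⟨i, hi⟩ := Function.ne_iff.1 hx
  exact sqrt_pos.2 <|
    Finset.sum_pos' (fun _ _ => sq_nonneg _) ⟨i, Finset.mem_univ i, sq_pos_of_ne_zero hi⟩

lemma l2Norm_neg (x : Fin k → ℝ) : l2Norm (-x) = l2Norm x := by
  simp [l2Norm]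

lemma sq_mul_sq_le_of_lInfNorm_le {c₀ μ s : ℝ} {x : Fin k → ℝ}
    (hx : lInfNorm x ≤ c₀ * (√k)⁻¹ * l2Norm x) (hs : c₀ ^ 2 * μ ^ 2 / (8 * k) ≤ s) (j : Fin k) :
    μ ^ 2 * x j ^ 2 ≤ 8 * s * l2Norm x ^ 2 := by
  have hk : (0 : ℝ) < k := Nat.cast_pos.2 j.pos
  have hxj : x j ^ 2 ≤ c₀ ^ 2 * l2Norm x ^ 2 / k :=
    calc x j ^ 2 = |x j| ^ 2 := (sq_abs _).symm
      _ ≤ (c₀ * (√k)⁻¹ * l2Norm x) ^ 2 :=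
        pow_le_pow_left₀ (abs_nonneg _) ((abs_le_lInfNorm x j).trans hx) 2
      _ = c₀ ^ 2 * l2Norm x ^ 2 / k := by rw [mul_pow, mul_pow, inv_pow, sq_sqrt hk.le]; ring
  calc μ ^ 2 * x j ^ 2 ≤ μ ^ 2 * (c₀ ^ 2 * l2Norm x ^ 2 / k) := by gcongr
    _ = 8 * (c₀ ^ 2 * μ ^ 2 / (8 * k)) * l2Norm x ^ 2 := by field_simp
    _ ≤ 8 * s * l2Norm x ^ 2 := by gcongr

end Norms

section Pi

variable {ι : Type*} [Fintype ι]

lemma mgf_dotProduct_pi (ν : ι → Measure ℝ) [∀ i, SigmaFinite (ν i)] (x : ι → ℝ) (t : ℝ) :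
    mgf (· ⬝ᵥ x) (Measure.pi ν) t = ∏ j, mgf id (ν j) (t * x j) := by
  simp only [mgf, dotProduct, Finset.mul_sum, exp_sum, id]
  rw [← integral_fintype_prod_eq_prod (fun j z => exp (t * x j * z))]
  simp only [mul_comm, mul_left_comm]

lemma integrable_exp_mul_dotProduct_pi (ν : ι → Measure ℝ) [∀ i, SigmaFinite (ν i)]
    (x : ι → ℝ) (t : ℝ) (h : ∀ j, Integrable (fun z => exp (t * x j * z)) (ν j)) :
    Integrable (fun a => exp (t * (a ⬝ᵥ x))) (Measure.pi ν) := by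
  simp only [dotProduct, Finset.mul_sum, exp_sum]
  convert Integrable.fintype_prod h using 3
  ring_nf

end Pi

section SparseGaussian

variable {s : ℝ}

lemma isProbabilityMeasure_sparseGaussianLaw (hs0 : 0 ≤ s) (hs1 : s ≤ 1) :
    IsProbabilityMeasure (sparseGaussianLaw s) := by
  constructor
  simp only [sparseGaussianLaw, Measure.add_apply, Measure.coe_nnreal_smul_apply, measure_univ,
    mul_one]
  rw [← ENNReal.coe_add, ← Real.toNNReal_add (by linarith) hs0]
  simp

lemma isProbabilityMeasure_sparseGaussianMatrixLaw (m n : ℕ) (hs0 : 0 ≤ s) (hs1 : s ≤ 1) :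
    IsProbabilityMeasure (sparseGaussianMatrixLaw m n s) := by
  have := isProbabilityMeasure_sparseGaussianLaw hs0 hs1
  unfold sparseGaussianMatrixLaw
  infer_instance

lemma integrable_exp_mul_sparseGaussianLaw (s t : ℝ) :
    Integrable (fun z => exp (t * z)) (sparseGaussianLaw s) :=
  integrable_add_measure.2 ⟨(integrable_dirac enorm_lt_top).smul_measure_nnreal,
    (integrable_exp_mul_gaussianReal t).smul_measure_nnreal⟩

lemma mgf_id_sparseGaussianLaw (hs0 : 0 ≤ s) (hs1 : s ≤ 1) (t : ℝ) :
    mgf id (sparseGaussianLaw s) t = 1 - s + s * exp (t ^ 2 / (2 * s)) := by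
  rw [sparseGaussianLaw, mgf_add_measure (X := id)
    (integrable_dirac enorm_lt_top).smul_measure_nnreal
    (integrable_exp_mul_gaussianReal t).smul_measure_nnreal]
  simp only [mgf, integral_smul_nnreal_measure, integral_dirac]
  rw [← mgf, mgf_id_gaussianReal]
  simp only [id, mul_zero, exp_zero, smul_eq_mul, NNReal.smul_def, mul_one, NNReal.coe_inv,
    Real.coe_toNNReal _ hs0, Real.coe_toNNReal _ (sub_nonneg.2 hs1), zero_mul, zero_add]
  ring_nf

lemma mgf_id_sparseGaussianLaw_le (hs0 : 0 < s) (hs1 : s ≤ 1) {t : ℝ} (ht : t ^ 2 ≤ 2 * s) :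
    mgf id (sparseGaussianLaw s) t ≤ exp ((exp 1 - 1) * t ^ 2 / 2) := by
  rw [mgf_id_sparseGaussianLaw hs0.le hs1]
  have hu := exp_le_one_add_exp_one_sub_one_mul (u := t ^ 2 / (2 * s)) (by positivity)
    ((div_le_one (by positivity)).2 ht)
  have hsu : s * (t ^ 2 / (2 * s)) = t ^ 2 / 2 := by field_simp
  have hsexp := mul_le_mul_of_nonneg_left hu hs0.le
  rw [mul_add, mul_one, mul_left_comm, hsu] at hsexp
  calc 1 - s + s * exp (t ^ 2 / (2 * s)) ≤ (exp 1 - 1) * (t ^ 2 / 2) + 1 := by linarith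
    _ ≤ exp ((exp 1 - 1) * t ^ 2 / 2) := by rw [← mul_div_assoc]; exact add_one_le_exp _

lemma mgf_dotProduct_pi_sparseGaussianLaw_le {ι : Type*} [Fintype ι] (hs0 : 0 < s) (hs1 : s ≤ 1)
    (x : ι → ℝ) {t : ℝ} (ht : ∀ j, (t * x j) ^ 2 ≤ 2 * s) :
    mgf (· ⬝ᵥ x) (Measure.pi fun _ : ι => sparseGaussianLaw s) t
      ≤ exp ((exp 1 - 1) * t ^ 2 * (∑ j, x j ^ 2) / 2) := by
  have := isProbabilityMeasure_sparseGaussianLaw hs0.le hs1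
  rw [mgf_dotProduct_pi]
  calc ∏ j, mgf id (sparseGaussianLaw s) (t * x j)
      ≤ ∏ j, exp ((exp 1 - 1) * (t * x j) ^ 2 / 2) :=
        Finset.prod_le_prod (fun _ _ => mgf_nonneg) fun j _ =>
          mgf_id_sparseGaussianLaw_le hs0 hs1 (ht j)
    _ = exp ((exp 1 - 1) * t ^ 2 * (∑ j, x j ^ 2) / 2) := by
        rw [← exp_sum, Finset.mul_sum, Finset.sum_div]
        exact congrArg exp (Finset.sum_congr rfl fun j _ => by ring)

end SparseGaussian

section Tail

variable {n : ℕ} {s μ : ℝ}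

lemma sparseGaussian_measureReal_dotProduct_ge_le (hs0 : 0 < s) (hs1 : s ≤ 1) (hμ : 0 ≤ μ)
    {x : Fin n → ℝ} (hx : x ≠ 0) (hspread : ∀ j, μ ^ 2 * x j ^ 2 ≤ 8 * s * l2Norm x ^ 2) :
    (Measure.pi fun _ : Fin n => sparseGaussianLaw s).real {a | μ * l2Norm x ≤ a ⬝ᵥ x}
      ≤ exp (-(μ ^ 2 / 4)) := by
  have := isProbabilityMeasure_sparseGaussianLaw hs0.le hs1
  have hL := l2Norm_pos hx
  set t := μ / (2 * l2Norm x) with ht_def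
  have ht : ∀ j, (t * x j) ^ 2 ≤ 2 * s := fun j => by
    rw [mul_pow, div_pow, div_mul_eq_mul_div, div_le_iff₀ (by positivity)]
    linarith [hspread j]
  calc _ ≤ exp (-t * (μ * l2Norm x)) * mgf (· ⬝ᵥ x) (Measure.pi fun _ => sparseGaussianLaw s) t :=
        measure_ge_le_exp_mul_mgf _ (by positivity) (integrable_exp_mul_dotProduct_pi _ _ _
          fun j => integrable_exp_mul_sparseGaussianLaw s _)
    _ ≤ exp (-t * (μ * l2Norm x)) * exp ((exp 1 - 1) * t ^ 2 * l2Norm x ^ 2 / 2) := by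
        rw [l2Norm_sq]
        gcongr
        exact mgf_dotProduct_pi_sparseGaussianLaw_le hs0 hs1 x ht
    _ = exp (-(μ ^ 2 / 2) + (exp 1 - 1) / 8 * μ ^ 2) := by
        have htL : t * l2Norm x = μ / 2 := by rw [ht_def]; field_simp
        rw [← exp_add]
        congr 1
        linear_combination (-μ + (exp 1 - 1) / 2 * (t * l2Norm x + μ / 2)) * htL
    _ ≤ exp (-(μ ^ 2 / 4)) := exp_le_exp.2 (by nlinarith [exp_one_lt_d9, sq_nonneg μ])

lemma sparseGaussian_measureReal_abs_dotProduct_ge_le (hs0 : 0 < s) (hs1 : s ≤ 1) (hμ : 0 ≤ μ)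
    {x : Fin n → ℝ} (hx : x ≠ 0) (hspread : ∀ j, μ ^ 2 * x j ^ 2 ≤ 8 * s * l2Norm x ^ 2) :
    (Measure.pi fun _ : Fin n => sparseGaussianLaw s).real {a | μ * l2Norm x ≤ |a ⬝ᵥ x|}
      ≤ 2 * exp (-(μ ^ 2 / 4)) := by
  have := isProbabilityMeasure_sparseGaussianLaw hs0.le hs1
  have hsplit : {a | μ * l2Norm x ≤ |a ⬝ᵥ x|}
      ⊆ {a | μ * l2Norm x ≤ a ⬝ᵥ x} ∪ {a | μ * l2Norm (-x) ≤ a ⬝ᵥ -x} := fun a ha => by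
    simpa [l2Norm_neg, dotProduct_neg, le_abs] using ha
  calc _ ≤ _ := measureReal_mono hsplit
    _ ≤ _ := measureReal_union_le _ _
    _ ≤ exp (-(μ ^ 2 / 4)) + exp (-(μ ^ 2 / 4)) := add_le_add
        (sparseGaussian_measureReal_dotProduct_ge_le hs0 hs1 hμ hx hspread)
        (sparseGaussian_measureReal_dotProduct_ge_le hs0 hs1 hμ (neg_ne_zero.2 hx)
          (by simpa [l2Norm_neg] using hspread))
    _ = 2 * exp (-(μ ^ 2 / 4)) := (two_mul _).symm

lemma one_sub_le_sparseGaussianMatrixLaw_lInfNorm_matVec_le {m : ℕ} (hs0 : 0 < s) (hs1 : s ≤ 1)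
    (hμ : 0 ≤ μ) (x : Fin n → ℝ) (hspread : ∀ j, μ ^ 2 * x j ^ 2 ≤ 8 * s * l2Norm x ^ 2) :
    1 - 2 * m * exp (-(μ ^ 2 / 4))
      ≤ (sparseGaussianMatrixLaw m n s).real {M | lInfNorm (matVec M x) ≤ μ * l2Norm x} := by
  have := isProbabilityMeasure_sparseGaussianLaw hs0.le hs1
  have := isProbabilityMeasure_sparseGaussianMatrixLaw m n hs0.le hs1
  rcases eq_or_ne x 0 with rfl | hx
  · have : 0 ≤ 2 * (m : ℝ) * exp (-(μ ^ 2 / 4)) := by positivity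
    simpa [matVec, l2Norm, lInfNorm] using this
  set T := {a : Fin n → ℝ | μ * l2Norm x ≤ |a ⬝ᵥ x|}
  have hrow (i : Fin m) :
      (sparseGaussianMatrixLaw m n s).real (Function.eval i ⁻¹' T) ≤ 2 * exp (-(μ ^ 2 / 4)) := by
    rw [sparseGaussianMatrixLaw, (measurePreserving_eval _ i).measureReal_preimage
      (measurableSet_le measurable_const (by fun_prop)).nullMeasurableSet]
    exact sparseGaussian_measureReal_abs_dotProduct_ge_le hs0 hs1 hμ hx hspread
  have hcompl := calc
    (sparseGaussianMatrixLaw m n s).real {M | lInfNorm (matVec M x) ≤ μ * l2Norm x}ᶜ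
      ≤ (sparseGaussianMatrixLaw m n s).real (⋃ i, Function.eval i ⁻¹' T) :=
        measureReal_mono <| compl_setOf_lInfNorm_matVec_le_subset x <|
          mul_nonneg hμ (l2Norm_pos hx).le
    _ ≤ ∑ i, (sparseGaussianMatrixLaw m n s).real (Function.eval i ⁻¹' T) :=
        measureReal_iUnion_fintype_le _
    _ ≤ ∑ _ : Fin m, 2 * exp (-(μ ^ 2 / 4)) := Finset.sum_le_sum fun i _ => hrow i
    _ = 2 * m * exp (-(μ ^ 2 / 4)) := by
        rw [Finset.sum_const, Finset.card_univ, Fintype.card_fin, nsmul_eq_mul]; ring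
  linarith [probReal_compl_eq_one_sub (μ := sparseGaussianMatrixLaw m n s)
    (measurableSet_lInfNorm_matVec_le x (μ * l2Norm x))]

end Tail

theorem sparse_gaussian_linf_concentration_general (c₀ : ℝ) (n m : ℕ)
    (β μ : ℝ)
    (hμ : 2 * Real.sqrt (β + Real.log (2 * (m : ℝ))) ≤ μ)
    (s : ℝ) (hs0 : 0 < s) (hs1 : s ≤ 1) (hs : c₀ ^ 2 * μ ^ 2 / (8 * (n : ℝ)) ≤ s)
    (Ω : Type) [MeasurableSpace Ω] (P : Measure Ω)
    (A : Ω → Fin m → Fin n → ℝ) (hA : Measurable A)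
    (hlaw : P.map A = sparseGaussianMatrixLaw m n s) :
    ∀ x : Fin n → ℝ, lInfNorm x ≤ c₀ * (Real.sqrt n)⁻¹ * l2Norm x →
      ENNReal.ofReal (1 - Real.exp (-β)) ≤
        P {ω | lInfNorm (matVec (A ω) x) ≤ μ * l2Norm x} := by
  intro x hx
  have := isProbabilityMeasure_sparseGaussianMatrixLaw m n hs0.le hs1
  have hμ0 : 0 ≤ μ := le_trans (by positivity) hμ
  have hbound := one_sub_le_sparseGaussianMatrixLaw_lInfNorm_matVec_le (m := m) hs0 hs1 hμ0 x
    (sq_mul_sq_le_of_lInfNorm_le hx hs)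
  calc ENNReal.ofReal (1 - exp (-β))
      ≤ ENNReal.ofReal ((sparseGaussianMatrixLaw m n s).real
          {M | lInfNorm (matVec M x) ≤ μ * l2Norm x}) := by
        gcongr
        linarith [two_mul_mul_exp_neg_sq_div_four_le (Nat.cast_nonneg m) hμ]
    _ = P {ω | lInfNorm (matVec (A ω) x) ≤ μ * l2Norm x} := by
        rw [ofReal_measureReal, ← hlaw, Measure.map_apply hA (measurableSet_lInfNorm_matVec_le x _)]
        rfl

/-- ℓ^∞ concentration for a sparse Gaussian matrix applied to a
well-spread vector. -/
theorem sparse_gaussian_linf_concentration (c₀ : ℝ) (hc₀ : 0 < c₀) (n m : ℕ)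
    (hn : 0 < n) (hm : 0 < m) (β μ : ℝ) (hβ : 0 < β) (hμ0 : 0 < μ)
    (hμ : 2 * Real.sqrt (β + Real.log (2 * (m : ℝ))) ≤ μ)
    (s : ℝ) (hs0 : 0 < s) (hs1 : s ≤ 1) (hs : c₀ ^ 2 * μ ^ 2 / (8 * (n : ℝ)) ≤ s)
    (Ω : Type) [MeasurableSpace Ω] (P : Measure Ω) [IsProbabilityMeasure P]
    (A : Ω → Fin m → Fin n → ℝ) (hA : Measurable A)
    (hlaw : P.map A = sparseGaussianMatrixLaw m n s) :
    ∀ x : Fin n → ℝ, lInfNorm x ≤ c₀ * (Real.sqrt n)⁻¹ * l2Norm x →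
      ENNReal.ofReal (1 - Real.exp (-β)) ≤
        P {ω | lInfNorm (matVec (A ω) x) ≤ μ * l2Norm x} :=
  sparse_gaussian_linf_concentration_general c₀ n m β μ hμ s hs0 hs1 hs Ω P A hA hlaw
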